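/- arXiv:1303.7462 — 5 statements merged into one kernel-verified Lean document; each statement's English description precedes it below -/
import Mathlib

section
/- Let w, s1, s2 be strings with s1, s2 nonempty, and let n1 < n2 ≤ |w| be natural numbers. Then applying the insert i(n1,s1) followed by the lifted insert i(n2+|s1|, s2) yields the same string as applying the insert i(n2,s2) followed by the (unlifted) insert i(n1,s1); that is, ins(n2+|s1|, s2)(ins(n1, s1)(w)) = ins(n1, s1)(ins(n2, s2)(w)). -/
/-- Insert `s` at position `n` in the string `w`. -/
def ins {α : Type*} (n : ℕ) (s w : List α) : List α :=
  w.take n ++ s ++ w.drop n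

theorem ins_append_of_length_le {α : Type*} {n : ℕ} (s : List α) {u : List α} (v : List α)
    (h : u.length ≤ n) : ins n s (u ++ v) = u ++ ins (n - u.length) s v := by
  simp only [ins, List.take_append, List.drop_append, List.take_of_length_le h,
    List.drop_of_length_le h, List.nil_append, List.append_assoc]

theorem ins_length_append {α : Type*} (s u v : List α) : ins u.length s (u ++ v) = u ++ s ++ v := by
  simp [ins]

theorem ins_ins_of_le {α : Type*} (w s1 s2 : List α) {n1 n2 : ℕ} (h12 : n1 ≤ n2)
    (h1 : n1 ≤ w.length) :
    ins (n2 + s1.length) s2 (ins n1 s1 w) = ins n1 s1 (ins n2 s2 w) := by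
  -- Splitting `w = u ++ v` at `n1`, both sides become `u ++ s1 ++ ins (n2 - n1) s2 v`.
  obtain ⟨u, v, rfl, rfl⟩ : ∃ u v, w = u ++ v ∧ u.length = n1 :=
    ⟨_, _, (List.take_append_drop n1 w).symm, List.length_take_of_le h1⟩
  have hlift : (u ++ s1).length ≤ n2 + s1.length := by simpa using h12
  rw [ins_length_append, ins_append_of_length_le s2 v hlift, ins_append_of_length_le s2 v h12,
    ins_length_append, List.length_append, Nat.add_sub_add_right]

theorem inserts_separated_converge_general {α : Type*}
    (w s1 s2 : List α)
    (n1 n2 : ℕ) (h12 : n1 < n2) (h2 : n2 ≤ w.length) :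
    ins (n2 + s1.length) s2 (ins n1 s1 w) = ins n1 s1 (ins n2 s2 w) :=
  ins_ins_of_le w s1 s2 h12.le (h12.le.trans h2)

/-- Two inserts, the first strictly to the left: the right one is lifted. -/
theorem inserts_separated_converge {α : Type*}
    (w s1 s2 : List α) (hs1 : s1 ≠ []) (hs2 : s2 ≠ [])
    (n1 n2 : ℕ) (h12 : n1 < n2) (h2 : n2 ≤ w.length) :
    ins (n2 + s1.length) s2 (ins n1 s1 w) = ins n1 s1 (ins n2 s2 w) :=
  inserts_separated_converge_general w s1 s2 n1 n2 h12 h2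
end

section
/- Let w, s1 be strings with s1 nonempty, l ≥ 1, and natural numbers n1, n2 with n2 + l ≤ n1 ≤ |w|. Then applying the insert i(n1,s1) followed by the (unlifted) delete d(n2,l) yields the same string as applying the delete d(n2,l) followed by the lifted insert i(n1-l, s1); that is, del(n2, l)(ins(n1, s1)(w)) = ins(n1-l, s1)(del(n2, l)(w)). -/
/-- Delete `l` characters starting at position `n` in the string `w`. -/
def del {α : Type*} (n l : ℕ) (w : List α) : List α :=
  w.take n ++ w.drop (n + l)

/-! Splitting `w = w.take n1 ++ w.drop n1`, both operations act inside the prefix or at its end,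
and the delete shortens the prefix from `n1` to `n1 - l`. -/

section

variable {α : Type*}

theorem ins_append_length (u s v : List α) : ins u.length s (u ++ v) = u ++ s ++ v := by
  simp [ins]

theorem del_append_of_add_le_length {n l : ℕ} {u : List α} (h : n + l ≤ u.length) (v : List α) :
    del n l (u ++ v) = del n l u ++ v := by
  simp [del, List.take_append_of_le_length (by omega : n ≤ u.length),
    List.drop_append_of_le_length h]

theorem length_del_of_add_le_length {n l : ℕ} {w : List α} (h : n + l ≤ w.length) :
    (del n l w).length = w.length - l := by
  simp only [del, List.length_append, List.length_take, List.length_drop]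
  omega

end

theorem delete_then_insert_converge_general {α : Type*}
    (w s1 : List α) (l : ℕ)
    (n1 n2 : ℕ) (h21 : n2 + l ≤ n1) (h1 : n1 ≤ w.length) :
    del n2 l (ins n1 s1 w) = ins (n1 - l) s1 (del n2 l w) := by
  have hpre : n2 + l ≤ (w.take n1).length := by rwa [List.length_take_of_le h1]
  have hlen : (del n2 l (w.take n1)).length = n1 - l := by
    rw [length_del_of_add_le_length hpre, List.length_take_of_le h1]
  calc del n2 l (ins n1 s1 w)
      = del n2 l (w.take n1 ++ (s1 ++ w.drop n1)) := by rw [ins, List.append_assoc]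
    _ = del n2 l (w.take n1) ++ s1 ++ w.drop n1 := by
      rw [del_append_of_add_le_length hpre, List.append_assoc]
    _ = ins (n1 - l) s1 (del n2 l (w.take n1) ++ w.drop n1) := by
      rw [← hlen, ins_append_length]
    _ = ins (n1 - l) s1 (del n2 l w) := by
      rw [← del_append_of_add_le_length hpre, List.take_append_drop]

/-- A delete strictly to the left of an insert: the insert is lifted down. -/
theorem delete_then_insert_converge {α : Type*}
    (w s1 : List α) (hs1 : s1 ≠ []) (l : ℕ) (hl : 1 ≤ l)
    (n1 n2 : ℕ) (h21 : n2 + l ≤ n1) (h1 : n1 ≤ w.length) :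
    del n2 l (ins n1 s1 w) = ins (n1 - l) s1 (del n2 l w) :=
  delete_then_insert_converge_general w s1 l n1 n2 h21 h1
end

section
/- Let w, s1 be strings with s1 nonempty, l2 ≥ 1, and natural numbers n1, n2 with n2 < n1 < n2 + l2 ≤ |w| (an insert landing strictly inside the range of a delete, so the delete is split by the insert). Then applying the insert i(n1,s1), followed by the left part of the split delete d(n2, n1-n2), followed by the lifted right part d(n2+|s1|, n2+l2-n1), yields the same string as applying the delete d(n2,l2) followed by the lifted insert i(n2,s1); that is, del(n2+|s1|, n2+l2-n1)(del(n2, n1-n2)(ins(n1, s1)(w))) = ins(n2, s1)(del(n2, l2)(w)). -/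
/-! Both sides equal `w.take n2 ++ s1 ++ w.drop (n2 + l2)`. A delete that ends exactly at an
insertion point commutes with the insert, a delete just behind the inserted block commutes with it
after shifting by `|s1|`, and two consecutive deletes at the same position merge into one. -/

section

variable {α : Type*}

theorem ins_of_length_le {n : ℕ} (s : List α) {w : List α} (h : w.length ≤ n) :
    ins n s w = w ++ s := by
  rw [ins, List.take_of_length_le h, List.drop_of_length_le h, List.append_nil]

theorem del_of_length_le {n : ℕ} (l : ℕ) {w : List α} (h : w.length ≤ n) : del n l w = w := by
  rw [del, List.take_of_length_le h, List.drop_of_length_le (by omega), List.append_nil]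

theorem del_length_append (l : ℕ) (u v : List α) : del u.length l (u ++ v) = u ++ v.drop l := by
  simp [del, List.drop_append]

theorem del_del (n j k : ℕ) (w : List α) : del n k (del n j w) = del n (j + k) w := by
  rcases le_or_gt n w.length with hn | hn
  · simp [del, List.drop_append, hn, add_assoc]
  · simp only [del_of_length_le _ hn.le]

theorem del_ins_length_add (n l : ℕ) (s w : List α) :
    del (n + s.length) l (ins n s w) = ins n s (del n l w) := by
  rcases le_or_gt n w.length with hn | hn
  · have hlen : (w.take n ++ s).length = n + s.length := by simp [hn]
    rw [ins, ← hlen, del_length_append]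
    simp [ins, del, hn]
  · rw [del_of_length_le _ hn.le, ins_of_length_le _ hn.le, del_of_length_le]
    simpa using hn.le

theorem del_ins_of_le {n m : ℕ} (s w : List α) (hnm : n ≤ m) (hm : m ≤ w.length) :
    del n (m - n) (ins m s w) = ins n s (del n (m - n) w) := by
  simp [del, ins, List.take_append, List.take_take, hm, (by omega : n ≤ w.length), min_eq_left hnm,
    Nat.sub_eq_zero_of_le hnm, Nat.add_sub_cancel' hnm]

end

theorem insert_inside_delete_converge_general {α : Type*}
    (w s1 : List α) (l2 : ℕ)
    (n1 n2 : ℕ) (h1 : n2 < n1) (h2 : n1 < n2 + l2) (h3 : n2 + l2 ≤ w.length) :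
    del (n2 + s1.length) (n2 + l2 - n1) (del n2 (n1 - n2) (ins n1 s1 w)) =
      ins n2 s1 (del n2 l2 w) := by
  rw [del_ins_of_le s1 w h1.le (by omega), del_ins_length_add, del_del,
    show n1 - n2 + (n2 + l2 - n1) = l2 by omega]

/-- An insert strictly inside the range of a delete: the delete is split
    by the insert and both orders of application converge. -/
theorem insert_inside_delete_converge {α : Type*}
    (w s1 : List α) (hs1 : s1 ≠ []) (l2 : ℕ) (hl2 : 1 ≤ l2)
    (n1 n2 : ℕ) (h1 : n2 < n1) (h2 : n1 < n2 + l2) (h3 : n2 + l2 ≤ w.length) :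
    del (n2 + s1.length) (n2 + l2 - n1) (del n2 (n1 - n2) (ins n1 s1 w)) =
      ins n2 s1 (del n2 l2 w) :=
  insert_inside_delete_converge_general w s1 l2 n1 n2 h1 h2 h3
end

section
/- Let w, s2 be strings with s2 nonempty, l1 ≥ 1, and natural numbers n1, n2 with n1 < n2 < n1 + l1 ≤ |w| (a delete whose range strictly contains the position of an insert, so the delete is split by the insert). Then applying the delete d(n1,l1) followed by the lifted insert i(n1,s2) yields the same string as applying the insert i(n2,s2), followed by the left part of the split delete d(n1, n2-n1), followed by the lifted right part d(n1+|s2|, n1+l1-n2); that is, ins(n1, s2)(del(n1, l1)(w)) = del(n1+|s2|, n1+l1-n2)(del(n1, n2-n1)(ins(n2, s2)(w))). -/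
section InsDel

variable {α : Type*}

theorem ins_del_self (n l : ℕ) (s w : List α) :
    ins n s (del n l w) = w.take n ++ s ++ w.drop (n + l) := by
  rcases le_or_gt n w.length with hn | hn
  · simp [ins, del, hn]
  · simp [ins, del, List.take_of_length_le, List.drop_of_length_le, hn.le,
      show w.length ≤ n + l by omega]

theorem del_sub_ins {n₁ n₂ : ℕ} (h : n₁ ≤ n₂) (s : List α) {w : List α} (hw : n₂ ≤ w.length) :
    del n₁ (n₂ - n₁) (ins n₂ s w) = w.take n₁ ++ s ++ w.drop n₂ := by
  simp [ins, del, List.take_append, List.take_take, hw, Nat.add_sub_cancel' h, h]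

end InsDel

theorem delete_split_by_insert_converge_general {α : Type*}
    (w s2 : List α) (l1 : ℕ)
    (n1 n2 : ℕ) (h1 : n1 < n2) (h2 : n2 < n1 + l1) (h3 : n1 + l1 ≤ w.length) :
    ins n1 s2 (del n1 l1 w) =
      del (n1 + s2.length) (n1 + l1 - n2) (del n1 (n2 - n1) (ins n2 s2 w)) := by
  have hprefix : (w.take n1 ++ s2).length = n1 + s2.length := by
    rw [List.length_append, List.length_take_of_le (by omega)]
  rw [del_sub_ins h1.le s2 (by omega), List.append_assoc, ← List.append_assoc, ← hprefix,
    del_length_append, List.drop_drop, ins_del_self, Nat.add_sub_cancel' h2.le]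

/-- A delete whose range strictly contains the position of an insert:
    the delete is split by the insert and both orders converge. -/
theorem delete_split_by_insert_converge {α : Type*}
    (w s2 : List α) (hs2 : s2 ≠ []) (l1 : ℕ) (hl1 : 1 ≤ l1)
    (n1 n2 : ℕ) (h1 : n1 < n2) (h2 : n2 < n1 + l1) (h3 : n1 + l1 ≤ w.length) :
    ins n1 s2 (del n1 l1 w) =
      del (n1 + s2.length) (n1 + l1 - n2) (del n1 (n2 - n1) (ins n2 s2 w)) :=
  delete_split_by_insert_converge_general w s2 l1 n1 n2 h1 h2 h3
end

section
/- Let α carry a linear order and order strings (lists over α) lexicographically. Let w, s1, s2 be strings with s1, s2 nonempty and n1, n2 ≤ |w|. Define the transformed positions m2 = n2 + |s1| if (n1 < n2, or n1 = n2 and s2 < s1 lexicographically), and m2 = n2 otherwise; symmetrically m1 = n1 + |s2| if (n2 < n1, or n2 = n1 and s1 < s2 lexicographically), and m1 = n1 otherwise. Then convergence holds for any pair of inserts: ins(m2, s2)(ins(n1, s1)(w)) = ins(m1, s1)(ins(n2, s2)(w)). -/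
section Ins

variable {α : Type*}

@[simp]
theorem ins_zero (s w : List α) : ins 0 s w = s ++ w := by
  simp [ins]

theorem ins_length_add_append (n : ℕ) (s u v : List α) :
    ins (u.length + n) s (u ++ v) = u ++ ins n s v := by
  simp [ins, List.take_length_add_append, List.drop_length_add_append]

theorem ins_add_length_ins {a b : ℕ} (s t w : List α) (hab : a ≤ b) (ha : a ≤ w.length) :
    ins (b + s.length) t (ins a s w) = ins a s (ins b t w) := by
  obtain ⟨u, v, rfl, rfl⟩ : ∃ u v, w = u ++ v ∧ u.length = a :=
    ⟨w.take a, w.drop a, (List.take_append_drop a w).symm, List.length_take_of_le ha⟩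
  obtain ⟨k, rfl⟩ := Nat.exists_eq_add_of_le hab
  have hsplit (x : List α) : ins u.length s (u ++ x) = u ++ s ++ x := by
    simpa using ins_length_add_append 0 s u x
  have hshift : u.length + k + s.length = (u ++ s).length + k := by
    simp only [List.length_append]; omega
  rw [hsplit, hshift, ins_length_add_append, ins_length_add_append, hsplit]

end Ins

theorem insert_insert_transform_converge_general {α : Type*} [LinearOrder α]
    (w s1 s2 : List α)
    (n1 n2 : ℕ) (h1 : n1 ≤ w.length) (h2 : n2 ≤ w.length) :
    ins (if n1 < n2 ∨ (n1 = n2 ∧ s2 < s1) then n2 + s1.length else n2) s2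
        (ins n1 s1 w) =
      ins (if n2 < n1 ∨ (n2 = n1 ∧ s1 < s2) then n1 + s2.length else n1) s1
        (ins n2 s2 w) := by
  rcases lt_trichotomy n1 n2 with h | rfl | h
  · rw [if_pos (Or.inl h), if_neg (by omega), ins_add_length_ins s1 s2 w h.le h1]
  · rcases lt_trichotomy s1 s2 with hs | rfl | hs
    · rw [if_neg (by simp [hs.not_gt]), if_pos (Or.inr ⟨rfl, hs⟩),
        ins_add_length_ins s2 s1 w le_rfl h1]
    · rfl
    · rw [if_pos (Or.inr ⟨rfl, hs⟩), if_neg (by simp [hs.not_gt]),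
        ins_add_length_ins s1 s2 w le_rfl h1]
  · rw [if_neg (by omega), if_pos (Or.inl h), ins_add_length_ins s2 s1 w h.le h2]

/-- The insert–insert fragment of convergence: lift the insert whose position
    is strictly greater, and at equal positions lift the lexicographically
    smaller string. Concurrent application in either order converges. -/
theorem insert_insert_transform_converge {α : Type*} [LinearOrder α]
    (w s1 s2 : List α) (hs1 : s1 ≠ []) (hs2 : s2 ≠ [])
    (n1 n2 : ℕ) (h1 : n1 ≤ w.length) (h2 : n2 ≤ w.length) :
    ins (if n1 < n2 ∨ (n1 = n2 ∧ s2 < s1) then n2 + s1.length else n2) s2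
        (ins n1 s1 w) =
      ins (if n2 < n1 ∨ (n2 = n1 ∧ s1 < s2) then n1 + s2.length else n1) s1
        (ins n2 s2 w) :=
  insert_insert_transform_converge_general w s1 s2 n1 n2 h1 h2
end
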